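/- arXiv:2506.19562 — 3 statements merged into one kernel-verified Lean document; each statement's English description precedes it below -/
import Mathlib

section
/- Let γ₁, γ₂ : [0,∞) → ℍ be two continuous curves landing at ∞ such that arg(γ₁(t)) → θ₁ and arg(γ₂(t)) → θ₂ as t → ∞, where θ₁, θ₂ ∈ (−π/2, π/2). Let {z_n} ⊂ ℍ be a sequence with |z_n| → ∞, and for each n let π_n¹ be a projection of z_n onto γ₁ and π_n² a projection of z_n onto γ₂. Then d_ℍ(π_n¹, π_n²) → d_ℍ(e^{iθ₁}, e^{iθ₂}) as n → ∞. -/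
open Complex Filter Topology

/-- Pseudo-hyperbolic distance on the right half-plane ℍ = {Re z > 0}. -/
noncomputable def rhoH (z w : ℂ) : ℝ := ‖(z - w) / (z + (starRingEnd ℂ) w)‖

/-- Hyperbolic distance on the right half-plane. -/
noncomputable def dH (z w : ℂ) : ℝ := (1/2) * Real.log ((1 + rhoH z w) / (1 - rhoH z w))

/-- `p` is a hyperbolic projection of `z` onto the curve `γ : [0,∞) → ℍ`. -/
def IsProjH (γ : ℝ → ℂ) (z p : ℂ) : Prop :=
  (∃ t ≥ (0:ℝ), p = γ t) ∧ ∀ t ≥ (0:ℝ), dH z p ≤ dH z (γ t)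

/-- `f` is a hyperbolic holomorphic self-map of the right half-plane with
Denjoy–Wolff point ∞: it preserves ℍ, is holomorphic on ℍ, its iterates tend to ∞
uniformly on compact subsets of ℍ, and `f(z)/z → c` for some `c > 1` as `z → ∞`
within every sector `{|arg z| < φ}`, `φ ∈ (0, π/2)`. -/
def HyperbolicAtInf (f : ℂ → ℂ) : Prop :=
  (∀ z : ℂ, 0 < z.re → 0 < (f z).re) ∧
  DifferentiableOn ℂ f {z : ℂ | 0 < z.re} ∧
  (∀ K : Set ℂ, K ⊆ {z : ℂ | 0 < z.re} → IsCompact K →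
    ∀ M : ℝ, ∃ N : ℕ, ∀ n ≥ N, ∀ z ∈ K, M < ‖f^[n] z‖) ∧
  (∃ c : ℝ, 1 < c ∧ ∀ φ ∈ Set.Ioo (0:ℝ) (Real.pi/2), ∀ ε > (0:ℝ), ∃ R : ℝ,
    ∀ z : ℂ, 0 < z.re → |z.arg| < φ → R < ‖z‖ →
      ‖f z / z - (c:ℂ)‖ < ε)

/-! Let `w = γ(s)` be a point of `γ` with `‖w‖ = ‖z‖`; such `s` exist and tend to `∞` as
`‖z‖ → ∞`. By `1 - ρ(z, w)² = 4 Re z Re w / ‖z + w̄‖²`, once `‖z‖` is large `w` is closer to `z`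
than every point of a fixed compact arc `γ([0, T])`, so the projections lie ever further out on
`γ` and their arguments tend to `θ`. Comparing the projection `π` with `w` once more gives
`cos (arg w) (‖π‖ - ‖z‖)² ≤ 4 ‖π‖ ‖z‖ |arg π - arg w|`, hence `‖π‖ / ‖z‖ → 1`. Thus
`π / ‖z‖ → e^{iθ}` for both curves, and the claim follows since `d_ℍ` is invariant under
dilations and continuous. -/

open ComplexConjugate

lemma rhoH_nonneg (z w : ℂ) : 0 ≤ rhoH z w := norm_nonneg _

lemma normSq_add_conj_pos {z w : ℂ} (hz : 0 < z.re) (hw : 0 < w.re) :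
    0 < normSq (z + conj w) := by
  have : 0 < (z + conj w).re := by simp only [add_re, conj_re]; linarith
  exact normSq_pos.2 fun h => by simp [h] at this

lemma one_sub_rhoH_sq {z w : ℂ} (hz : 0 < z.re) (hw : 0 < w.re) :
    1 - rhoH z w ^ 2 = 4 * z.re * w.re / normSq (z + conj w) := by
  rw [rhoH, norm_div, div_pow, Complex.sq_norm, Complex.sq_norm,
    one_sub_div (normSq_add_conj_pos hz hw).ne']
  simp only [normSq_apply, add_re, add_im, sub_re, sub_im, conj_re, conj_im]
  ring

lemma rhoH_lt_one {z w : ℂ} (hz : 0 < z.re) (hw : 0 < w.re) : rhoH z w < 1 := by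
  have h := one_sub_rhoH_sq hz hw
  have : 0 < 4 * z.re * w.re / normSq (z + conj w) := by
    have := normSq_add_conj_pos hz hw
    positivity
  nlinarith [rhoH_nonneg z w]

lemma dH_eq_artanh {z w : ℂ} (hz : 0 < z.re) (hw : 0 < w.re) :
    dH z w = Real.artanh (rhoH z w) :=
  (Real.artanh_eq_half_log ⟨by linarith [rhoH_nonneg z w], (rhoH_lt_one hz hw).le⟩).symm

lemma dH_le_dH_iff {z p w : ℂ} (hz : 0 < z.re) (hp : 0 < p.re) (hw : 0 < w.re) :
    dH z p ≤ dH z w ↔ w.re * normSq (z + conj p) ≤ p.re * normSq (z + conj w) := by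
  have hρ {q : ℂ} (hq : 0 < q.re) : rhoH z q ∈ Set.Ioo (-1) 1 :=
    ⟨by linarith [rhoH_nonneg z q], rhoH_lt_one hz hq⟩
  rw [dH_eq_artanh hz hp, dH_eq_artanh hz hw, Real.artanh_le_artanh_iff (hρ hp) (hρ hw),
    ← sq_le_sq₀ (rhoH_nonneg _ _) (rhoH_nonneg _ _), ← sub_le_sub_iff_left 1,
    one_sub_rhoH_sq hz hp, one_sub_rhoH_sq hz hw,
    div_le_div_iff₀ (normSq_add_conj_pos hz hw) (normSq_add_conj_pos hz hp),
    mul_assoc (4 * z.re), mul_assoc (4 * z.re), mul_le_mul_iff_right₀ (by positivity)]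

lemma dH_div_ofReal {c : ℝ} (hc : 0 < c) (z w : ℂ) : dH (z / c) (w / c) = dH z w := by
  have hc' : (c : ℂ) ≠ 0 := ofReal_ne_zero.2 hc.ne'
  have : (z / c - w / c) / (z / c + conj (w / c)) = (z - w) / (z + conj w) := by
    rw [map_div₀, conj_ofReal, ← add_div, ← sub_div, div_div_div_cancel_right₀ hc']
  simp only [dH, rhoH, this]

lemma continuousAt_dH {z w : ℂ} (hz : 0 < z.re) (hw : 0 < w.re) :
    ContinuousAt (fun q : ℂ × ℂ => dH q.1 q.2) (z, w) := by
  have hρ : ContinuousAt (fun q : ℂ × ℂ => rhoH q.1 q.2) (z, w) := by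
    unfold rhoH
    have := normSq_add_conj_pos hz hw
    fun_prop (disch := exact fun h => by simp [h] at this)
  have h1 := rhoH_lt_one hz hw
  have h0 := rhoH_nonneg z w
  unfold dH
  refine continuousAt_const.mul (ContinuousAt.log ?_ ?_)
  · exact (continuousAt_const.add hρ).div (continuousAt_const.sub hρ) (by simp; linarith)
  · exact (div_pos (by linarith) (by linarith)).ne'

lemma re_mul_normSq_lt_of_norm_le {z w q : ℂ} {c C : ℝ} (hw : ‖w‖ = ‖z‖)
    (hcw : c * ‖z‖ ≤ w.re) (hq : ‖q‖ ≤ C) (hCz : C ≤ ‖z‖)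
    (hbig : 4 * ‖z‖ * C < c * (‖z‖ - C) ^ 2) :
    q.re * normSq (z + conj w) < w.re * normSq (z + conj q) := by
  set R := ‖z‖
  have hC : 0 ≤ C := (norm_nonneg q).trans hq
  have hc : 0 < c := by nlinarith
  have hR : 0 < R := by
    refine (hC.trans hCz).lt_of_ne fun hR0 => ?_
    rw [← hR0, show C = 0 by linarith] at hbig
    simp at hbig
  have hNw : normSq (z + conj w) ≤ (2 * R) ^ 2 := by
    rw [normSq_eq_norm_sq]
    have : ‖z + conj w‖ ≤ 2 * R :=
      (norm_add_le z (conj w)).trans_eq (by rw [norm_conj, hw]; ring)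
    gcongr
  have hNq : (R - C) ^ 2 ≤ normSq (z + conj q) := by
    rw [normSq_eq_norm_sq]
    have : R - C ≤ ‖z + conj q‖ := by
      have := norm_sub_norm_le z (-conj q)
      rw [norm_neg, norm_conj, sub_neg_eq_add] at this
      linarith
    gcongr
  calc q.re * normSq (z + conj w) ≤ C * (2 * R) ^ 2 :=
        mul_le_mul ((re_le_norm q).trans hq) hNw (normSq_nonneg _) hC
    _ = R * (4 * R * C) := by ring
    _ < R * (c * (R - C) ^ 2) := by gcongr
    _ = (c * R) * (R - C) ^ 2 := by ring
    _ ≤ w.re * normSq (z + conj q) :=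
        mul_le_mul hcw hNq (sq_nonneg _) ((mul_pos hc hR).le.trans hcw)

lemma eventually_le_and_four_mul_lt_mul_sub_sq {ι : Type*} {l : Filter ι} {f : ι → ℝ}
    (hf : Tendsto f l atTop) {c C : ℝ} (hc : 0 < c) (hC : 0 ≤ C) :
    ∀ᶠ i in l, C ≤ f i ∧ 4 * f i * C < c * (f i - C) ^ 2 := by
  filter_upwards [hf.eventually_ge_atTop (2 * C), hf.eventually_gt_atTop (16 * C / c)]
    with i h2C h16
  have hpos : 0 < f i := (div_nonneg (by positivity) hc.le).trans_lt h16
  rw [div_lt_iff₀' hc] at h16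
  have : (f i / 2) ^ 2 ≤ (f i - C) ^ 2 := by gcongr; linarith
  refine ⟨by linarith, ?_⟩
  calc 4 * f i * C = f i * (16 * C) / 4 := by ring
    _ < f i * (c * f i) / 4 := by gcongr
    _ = c * (f i / 2) ^ 2 := by ring
    _ ≤ c * (f i - C) ^ 2 := by gcongr

lemma cos_arg_mul_sq_sub_norm_le {z p w : ℂ} (hz : z ≠ 0) (hw : ‖w‖ = ‖z‖)
    (h : w.re * normSq (z + conj p) ≤ p.re * normSq (z + conj w)) :
    Real.cos (arg w) * (‖p‖ - ‖z‖) ^ 2 ≤ 4 * ‖p‖ * ‖z‖ * |arg p - arg w| := by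
  have hR : 0 < ‖z‖ := norm_pos_iff.2 hz
  have hzR : z.re ^ 2 + z.im ^ 2 = ‖z‖ ^ 2 := by
    rw [← normSq_eq_norm_sq, normSq_apply]; ring
  simp only [normSq_apply, add_re, add_im, conj_re, conj_im, ← norm_mul_cos_arg p,
    ← norm_mul_cos_arg w, ← norm_mul_sin_arg p, ← norm_mul_sin_arg w, hw] at h
  have key : ‖z‖ * (Real.cos (arg w) * (‖p‖ - ‖z‖) ^ 2) ≤ ‖z‖ * (2 * ‖p‖ * ‖z‖ *
      (Real.cos (arg p) - Real.cos (arg w)) + 2 * ‖p‖ * (z.im * Real.sin (arg p - arg w))) := by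
    rw [Real.sin_sub]
    linear_combination h + (‖p‖ * Real.cos (arg p) - ‖z‖ * Real.cos (arg w)) * hzR
      - ‖z‖ * Real.cos (arg w) * ‖p‖ ^ 2 * Real.sin_sq_add_cos_sq (arg p)
      + ‖p‖ * Real.cos (arg p) * ‖z‖ ^ 2 * Real.sin_sq_add_cos_sq (arg w)
  have hcos := Real.abs_cos_sub_cos_le (arg p) (arg w)
  have hsin : |z.im * Real.sin (arg p - arg w)| ≤ ‖z‖ * |arg p - arg w| := by
    rw [abs_mul]
    exact mul_le_mul (abs_im_le_norm z) Real.abs_sin_le_abs (abs_nonneg _) hR.le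
  calc Real.cos (arg w) * (‖p‖ - ‖z‖) ^ 2
      ≤ 2 * ‖p‖ * ‖z‖ * (Real.cos (arg p) - Real.cos (arg w))
        + 2 * ‖p‖ * (z.im * Real.sin (arg p - arg w)) := le_of_mul_le_mul_left key hR
    _ ≤ 2 * ‖p‖ * ‖z‖ * |arg p - arg w| + 2 * ‖p‖ * (‖z‖ * |arg p - arg w|) := by
        gcongr 2 * ‖p‖ * ‖z‖ * ?_ + 2 * ‖p‖ * ?_
        · exact (le_abs_self _).trans hcos
        · exact (le_abs_self _).trans hsin
    _ = 4 * ‖p‖ * ‖z‖ * |arg p - arg w| := by ring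

lemma tendsto_one_of_sq_sub_one_le {ι : Type*} {l : Filter ι} {x η : ι → ℝ}
    (hη : Tendsto η l (𝓝 0)) (hx : ∀ᶠ i in l, (x i - 1) ^ 2 ≤ η i * x i) :
    Tendsto x l (𝓝 1) := by
  have hb : Tendsto (fun i => |η i| + √|η i|) l (𝓝 0) := by
    have := hη.abs
    simpa using this.add this.sqrt
  rw [tendsto_iff_norm_sub_tendsto_zero]
  refine squeeze_zero' (.of_forall fun i => norm_nonneg _) ?_ hb
  filter_upwards [hx] with i hi
  rw [Real.norm_eq_abs]
  have hs := Real.sq_sqrt (abs_nonneg (η i))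
  have hs0 := Real.sqrt_nonneg |η i|
  have : (x i - 1) ^ 2 ≤ |η i| * (|x i - 1| + 1) := by
    calc (x i - 1) ^ 2 ≤ η i * x i := hi
      _ ≤ |η i * x i| := le_abs_self _
      _ = |η i| * |x i - 1 + 1| := by rw [abs_mul, sub_add_cancel]
      _ ≤ |η i| * (|x i - 1| + 1) := by gcongr; exact (abs_add_le _ _).trans_eq (by simp)
  by_contra! hlt
  rw [← sq_abs] at this
  nlinarith [abs_nonneg (η i), abs_nonneg (x i - 1)]

section Curve

variable {γ : ℝ → ℂ} {θ : ℝ} {ι : Type*} {l : Filter ι}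

lemma exists_norm_eq_of_tendsto (hc : ContinuousOn γ (Set.Ici 0))
    (hland : Tendsto (fun t => ‖γ t‖) atTop atTop) {R : ℝ} (hR : ‖γ 0‖ ≤ R) :
    ∃ s, 0 ≤ s ∧ ‖γ s‖ = R := by
  obtain ⟨T, hT, hT0⟩ := ((hland.eventually_ge_atTop R).and (eventually_ge_atTop 0)).exists
  obtain ⟨s, hs, hsR⟩ := intermediate_value_Icc hT0
    (continuous_norm.comp_continuousOn (hc.mono Set.Icc_subset_Ici_self)) ⟨hR, hT⟩
  exact ⟨s, hs.1, hsR⟩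

lemma tendsto_atTop_of_tendsto_norm_comp (hc : ContinuousOn γ (Set.Ici 0)) {s : ι → ℝ}
    (hs0 : ∀ i, 0 ≤ s i) (hs : Tendsto (fun i => ‖γ (s i)‖) l atTop) :
    Tendsto s l atTop := by
  refine tendsto_atTop.2 fun T => ?_
  obtain ⟨C, hC⟩ := (isCompact_Icc : IsCompact (Set.Icc 0 T)).exists_bound_of_continuousOn
    (hc.mono Set.Icc_subset_Ici_self)
  filter_upwards [hs.eventually_gt_atTop C] with i hi
  by_contra! hsT
  exact (hC (s i) ⟨hs0 i, hsT.le⟩).not_gt hi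

lemma exists_tendsto_atTop_norm_comp_eq (hc : ContinuousOn γ (Set.Ici 0))
    (hland : Tendsto (fun t => ‖γ t‖) atTop atTop) {z : ι → ℂ}
    (hzinf : Tendsto (fun i => ‖z i‖) l atTop) :
    ∃ s : ι → ℝ, (∀ i, 0 ≤ s i) ∧ Tendsto s l atTop ∧ ∀ᶠ i in l, ‖γ (s i)‖ = ‖z i‖ := by
  have : ∀ i, ∃ s, 0 ≤ s ∧ (‖γ 0‖ ≤ ‖z i‖ → ‖γ s‖ = ‖z i‖) := fun i =>
    if h : ‖γ 0‖ ≤ ‖z i‖ then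
      (exists_norm_eq_of_tendsto hc hland h).imp fun _ hs => ⟨hs.1, fun _ => hs.2⟩
    else ⟨0, le_rfl, fun h' => absurd h' h⟩
  choose s hs0 hs using this
  have hsz : ∀ᶠ i in l, ‖γ (s i)‖ = ‖z i‖ := (hzinf.eventually_ge_atTop ‖γ 0‖).mono hs
  exact ⟨s, hs0, tendsto_atTop_of_tendsto_norm_comp hc hs0
    (hzinf.congr' (hsz.mono fun _ h => h.symm)), hsz⟩

lemma tendsto_atTop_of_dH_le (hc : ContinuousOn γ (Set.Ici 0))
    (hin : ∀ t ≥ (0 : ℝ), 0 < (γ t).re) (hcos : 0 < Real.cos θ)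
    (hslope : Tendsto (fun t => (γ t).arg) atTop (𝓝 θ)) {z : ι → ℂ} (hz : ∀ i, 0 < (z i).re)
    (hzinf : Tendsto (fun i => ‖z i‖) l atTop) {s t : ι → ℝ} (hs0 : ∀ i, 0 ≤ s i)
    (hs : Tendsto s l atTop) (hsz : ∀ᶠ i in l, ‖γ (s i)‖ = ‖z i‖) (ht0 : ∀ i, 0 ≤ t i)
    (hmin : ∀ i, dH (z i) (γ (t i)) ≤ dH (z i) (γ (s i))) :
    Tendsto t l atTop := by
  have hre : ∀ᶠ i in l, Real.cos θ / 2 * ‖z i‖ ≤ (γ (s i)).re := by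
    have : ∀ᶠ i in l, Real.cos θ / 2 < Real.cos (γ (s i)).arg :=
      ((Real.continuous_cos.tendsto θ).comp (hslope.comp hs)).eventually
        (lt_mem_nhds (half_lt_self hcos))
    filter_upwards [this, hsz] with i hi hi'
    rw [← norm_mul_cos_arg, hi', mul_comm]
    gcongr
  refine tendsto_atTop.2 fun T => ?_
  obtain ⟨C, hC⟩ := (isCompact_Icc : IsCompact (Set.Icc 0 T)).exists_bound_of_continuousOn
    (hc.mono Set.Icc_subset_Ici_self)
  filter_upwards [hre, hsz,
    eventually_le_and_four_mul_lt_mul_sub_sq hzinf (half_pos hcos) (le_max_right C 0)]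
    with i hre hsz hbig
  by_contra! htT
  have hcloser := re_mul_normSq_lt_of_norm_le hsz hre
    ((hC _ ⟨ht0 i, htT.le⟩).trans (le_max_left _ _)) hbig.1 hbig.2
  exact hcloser.not_ge ((dH_le_dH_iff (hz i) (hin _ (ht0 i)) (hin _ (hs0 i))).1 (hmin i))

lemma tendsto_norm_div_of_dH_le (hin : ∀ t ≥ (0 : ℝ), 0 < (γ t).re) (hcos : 0 < Real.cos θ)
    (hslope : Tendsto (fun t => (γ t).arg) atTop (𝓝 θ)) {z : ι → ℂ} (hz : ∀ i, 0 < (z i).re)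
    {s t : ι → ℝ} (hs0 : ∀ i, 0 ≤ s i) (hs : Tendsto s l atTop)
    (hsz : ∀ᶠ i in l, ‖γ (s i)‖ = ‖z i‖) (ht0 : ∀ i, 0 ≤ t i) (ht : Tendsto t l atTop)
    (hmin : ∀ i, dH (z i) (γ (t i)) ≤ dH (z i) (γ (s i))) :
    Tendsto (fun i => ‖γ (t i)‖ / ‖z i‖) l (𝓝 1) := by
  have hα := hslope.comp ht
  have hφ := hslope.comp hs
  have hcosφ := (Real.continuous_cos.tendsto θ).comp hφ
  have hη : Tendsto (fun i => 4 * |(γ (t i)).arg - (γ (s i)).arg| / Real.cos (γ (s i)).arg) l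
      (𝓝 0) := by
    have := ((hα.sub hφ).abs.const_mul 4).div hcosφ hcos.ne'
    rwa [sub_self, abs_zero, mul_zero, zero_div] at this
  refine tendsto_one_of_sq_sub_one_le hη ?_
  filter_upwards [hsz, hcosφ.eventually (lt_mem_nhds hcos)] with i hsz hpos
  have hz0 : z i ≠ 0 := fun h => by simpa [h] using hz i
  have hR : 0 < ‖z i‖ := norm_pos_iff.2 hz0
  have := cos_arg_mul_sq_sub_norm_le hz0 hsz
    ((dH_le_dH_iff (hz i) (hin _ (ht0 i)) (hin _ (hs0 i))).1 (hmin i))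
  rw [div_sub_one hR.ne', div_pow, div_mul_div_comm,
    div_le_div_iff₀ (by positivity) (by positivity)]
  linear_combination ‖z i‖ * this

lemma tendsto_div_norm_of_isProjH (hc : ContinuousOn γ (Set.Ici 0))
    (hin : ∀ t ≥ (0 : ℝ), 0 < (γ t).re) (hland : Tendsto (fun t => ‖γ t‖) atTop atTop)
    (hcos : 0 < Real.cos θ) (hslope : Tendsto (fun t => (γ t).arg) atTop (𝓝 θ))
    {z p : ι → ℂ} (hz : ∀ i, 0 < (z i).re) (hzinf : Tendsto (fun i => ‖z i‖) l atTop)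
    (hp : ∀ i, IsProjH γ (z i) (p i)) :
    Tendsto (fun i => p i / ‖z i‖) l (𝓝 (exp (θ * I))) := by
  choose t ht0 hpt using fun i => (hp i).1
  obtain ⟨s, hs0, hs, hsz⟩ := exists_tendsto_atTop_norm_comp_eq hc hland hzinf
  have hmin : ∀ i, dH (z i) (γ (t i)) ≤ dH (z i) (γ (s i)) := fun i =>
    hpt i ▸ (hp i).2 _ (hs0 i)
  have ht := tendsto_atTop_of_dH_le hc hin hcos hslope hz hzinf hs0 hs hsz ht0 hmin
  have hnorm := tendsto_norm_div_of_dH_le hin hcos hslope hz hs0 hs hsz ht0 ht hmin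
  have harg := (continuous_ofReal.tendsto θ).comp (hslope.comp ht)
  have := ((continuous_ofReal.tendsto 1).comp hnorm).mul
    ((continuous_exp.tendsto _).comp (harg.mul_const I))
  rw [ofReal_one, one_mul] at this
  refine this.congr fun i => ?_
  simp only [Function.comp_apply]
  rw [hpt i, ofReal_div, div_mul_eq_mul_div, norm_mul_exp_arg_mul_I]

end Curve

/-- projections onto curves landing at ∞ with (possibly different)
slopes θ₁, θ₂ satisfy d_ℍ(π_n¹, π_n²) → d_ℍ(e^{iθ₁}, e^{iθ₂}). -/
theorem stmt5 (γ₁ γ₂ : ℝ → ℂ)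
    (h1c : ContinuousOn γ₁ (Set.Ici 0)) (h2c : ContinuousOn γ₂ (Set.Ici 0))
    (h1in : ∀ t ≥ (0:ℝ), 0 < (γ₁ t).re) (h2in : ∀ t ≥ (0:ℝ), 0 < (γ₂ t).re)
    (h1land : Tendsto (fun t : ℝ => ‖γ₁ t‖) atTop atTop)
    (h2land : Tendsto (fun t : ℝ => ‖γ₂ t‖) atTop atTop)
    (θ₁ θ₂ : ℝ)
    (hθ₁ : θ₁ ∈ Set.Ioo (-(Real.pi/2)) (Real.pi/2))
    (hθ₂ : θ₂ ∈ Set.Ioo (-(Real.pi/2)) (Real.pi/2))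
    (h1slope : Tendsto (fun t : ℝ => (γ₁ t).arg) atTop (𝓝 θ₁))
    (h2slope : Tendsto (fun t : ℝ => (γ₂ t).arg) atTop (𝓝 θ₂))
    (z : ℕ → ℂ) (hz : ∀ n, 0 < (z n).re)
    (hzinf : Tendsto (fun n : ℕ => ‖z n‖) atTop atTop)
    (p₁ p₂ : ℕ → ℂ)
    (hp₁ : ∀ n : ℕ, IsProjH γ₁ (z n) (p₁ n))
    (hp₂ : ∀ n : ℕ, IsProjH γ₂ (z n) (p₂ n)) :
    Tendsto (fun n : ℕ => dH (p₁ n) (p₂ n)) atTop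
      (𝓝 (dH (Complex.exp ((θ₁ : ℂ) * I)) (Complex.exp ((θ₂ : ℂ) * I)))) := by
  have hcos₁ := Real.cos_pos_of_mem_Ioo hθ₁
  have hcos₂ := Real.cos_pos_of_mem_Ioo hθ₂
  have h₁ := tendsto_div_norm_of_isProjH h1c h1in h1land hcos₁ h1slope hz hzinf hp₁
  have h₂ := tendsto_div_norm_of_isProjH h2c h2in h2land hcos₂ h2slope hz hzinf hp₂
  have hdH := continuousAt_dH (z := exp (θ₁ * I)) (w := exp (θ₂ * I))
    (by rwa [exp_ofReal_mul_I_re]) (by rwa [exp_ofReal_mul_I_re])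
  refine (hdH.tendsto.comp (h₁.prodMk_nhds h₂)).congr fun n => ?_
  exact dH_div_ofReal (norm_pos_iff.2 fun h => by simpa [h] using hz n) _ _
end

section
/- Let γ : [0,∞) → ℍ be a continuous curve landing at ∞ such that arg(γ(t)) → θ as t → ∞ for some θ ∈ (−π/2, π/2). Let {z_n} ⊂ ℍ be a sequence with |z_n| → ∞ and, for each n, let π_n be a projection of z_n onto γ. Then d_ℍ(|z_n|·e^{iθ}, π_n) → 0 as n → ∞; that is, the projections onto γ are asymptotically close to the radial projections |z_n|e^{iθ} onto the ray of argument θ. -/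
/-!
Rotating by `I` identifies `ℍ` with the upper half-plane, so `dH` is half the hyperbolic metric
there and `cosh² (dH z w) = |z + conj w|² / (4 Re z Re w)`. For `q = |z| e^{iθ}` this gives the
exact identity `cosh² d(z, s e^{iθ}) = cosh² d(z, q) + (|z| - s)² / (4 Re z · s cos θ)`, and since
`cosh² d(z, q) ≤ |z| / (Re z cos θ)`, a point `s e^{iθ}` that is `δ`-almost as close to `z` as `q`
is within `√(e^{2δ} - 1) / cos θ` of `q`, uniformly in `z`.

The point of `γ` with modulus `|z_n|` (intermediate value theorem) is close to `q_n` because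
`arg γ → θ`, so the projection `π_n` is almost as close to `z_n` as `q_n`. The same estimates force
`|π_n| → ∞`, so `π_n` lies far out on `γ` and is close to its own radial point `|π_n| e^{iθ}`;
the identity then makes that point, hence `π_n`, close to `q_n`.
-/

open Complex Filter Topology

def toUpperHalfPlane (z : ℂ) (hz : 0 < z.re) : UpperHalfPlane :=
  ⟨I * z, by simpa using hz⟩

lemma norm_I_mul_sub_conj_I_mul (z w : ℂ) :
    ‖I * z - (starRingEnd ℂ) (I * w)‖ = ‖z + (starRingEnd ℂ) w‖ := by
  rw [map_mul, Complex.conj_I,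
    show I * z - -I * (starRingEnd ℂ) w = I * (z + (starRingEnd ℂ) w) by ring, norm_mul,
    Complex.norm_I, one_mul]

lemma dH_eq_dist_div_two {z w : ℂ} (hz : 0 < z.re) (hw : 0 < w.re) :
    dH z w = dist (toUpperHalfPlane z hz) (toUpperHalfPlane w hw) / 2 := by
  have hρ : rhoH z w = Real.tanh (dist (toUpperHalfPlane z hz) (toUpperHalfPlane w hw) / 2) := by
    rw [UpperHalfPlane.tanh_half_dist, rhoH, norm_div]
    simp only [toUpperHalfPlane, UpperHalfPlane.coe_mk, Complex.dist_eq, ← mul_sub, norm_mul,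
      Complex.norm_I, one_mul, norm_I_mul_sub_conj_I_mul]
  rw [dH, hρ, ← Real.artanh_eq_half_log ⟨(Real.neg_one_lt_tanh _).le, (Real.tanh_lt_one _).le⟩,
    Real.artanh_tanh]

lemma dH_nonneg {z w : ℂ} (hz : 0 < z.re) (hw : 0 < w.re) : 0 ≤ dH z w := by
  rw [dH_eq_dist_div_two hz hw]; positivity

lemma dH_comm {z w : ℂ} (hz : 0 < z.re) (hw : 0 < w.re) : dH z w = dH w z := by
  rw [dH_eq_dist_div_two hz hw, dH_eq_dist_div_two hw hz, dist_comm]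

lemma dH_triangle {a b c : ℂ} (ha : 0 < a.re) (hb : 0 < b.re) (hc : 0 < c.re) :
    dH a c ≤ dH a b + dH b c := by
  rw [dH_eq_dist_div_two ha hc, dH_eq_dist_div_two ha hb, dH_eq_dist_div_two hb hc, ← add_div]
  gcongr
  exact dist_triangle _ _ _

lemma cosh_dH_sq {z w : ℂ} (hz : 0 < z.re) (hw : 0 < w.re) :
    Real.cosh (dH z w) ^ 2 = ‖z + (starRingEnd ℂ) w‖ ^ 2 / (4 * (z.re * w.re)) := by
  rw [dH_eq_dist_div_two hz hw, UpperHalfPlane.cosh_half_dist, div_pow, mul_pow,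
    Real.sq_sqrt (by positivity)]
  simp only [toUpperHalfPlane, UpperHalfPlane.coe_mk, UpperHalfPlane.mk_im, Complex.dist_eq,
    norm_I_mul_sub_conj_I_mul]
  norm_num

lemma sinh_dH_sq {z w : ℂ} (hz : 0 < z.re) (hw : 0 < w.re) :
    Real.sinh (dH z w) ^ 2 = ‖z - w‖ ^ 2 / (4 * (z.re * w.re)) := by
  rw [dH_eq_dist_div_two hz hw, UpperHalfPlane.sinh_half_dist, div_pow, mul_pow,
    Real.sq_sqrt (by positivity)]
  simp only [toUpperHalfPlane, UpperHalfPlane.coe_mk, UpperHalfPlane.mk_im, Complex.dist_eq,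
    ← mul_sub, norm_mul, Complex.norm_I, one_mul]
  norm_num

lemma dH_ofReal_mul {c : ℝ} (hc : c ≠ 0) (z w : ℂ) : dH (c * z) (c * w) = dH z w := by
  have hc' : (c : ℂ) ≠ 0 := Complex.ofReal_ne_zero.2 hc
  have hρ : rhoH (c * z) (c * w) = rhoH z w := by
    rw [rhoH, rhoH, map_mul, Complex.conj_ofReal, ← mul_sub, ← mul_add, mul_div_mul_left _ _ hc']
  rw [dH, dH, hρ]

lemma dH_self (z : ℂ) : dH z z = 0 := by
  simp [dH, rhoH]

lemma dH_eq_dH_exp_arg {v : ℂ} (hv : v ≠ 0) (θ : ℝ) :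
    dH v (‖v‖ * exp (θ * I)) = dH (exp (v.arg * I)) (exp (θ * I)) := by
  simpa only [Complex.norm_mul_exp_arg_mul_I] using
    dH_ofReal_mul (norm_ne_zero_iff.2 hv) (exp (v.arg * I)) (exp (θ * I))

lemma tendsto_dH_exp_mul_I {θ : ℝ} (hθ : 0 < Real.cos θ) :
    Tendsto (fun α : ℝ => dH (exp (α * I)) (exp (θ * I))) (𝓝 θ) (𝓝 0) := by
  have hden : exp (θ * I) + (starRingEnd ℂ) (exp (θ * I)) ≠ 0 := by
    rw [Complex.add_conj, Complex.exp_ofReal_mul_I_re]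
    exact_mod_cast (mul_pos two_pos hθ).ne'
  have hcont : ContinuousAt (fun α : ℝ => dH (exp (α * I)) (exp (θ * I))) θ := by
    unfold dH rhoH
    fun_prop (disch := first | exact hden | simp)
  simpa [dH_self] using hcont.tendsto

lemma re_ofReal_mul_exp (s θ : ℝ) : ((s : ℂ) * exp (θ * I)).re = s * Real.cos θ := by
  simp [Complex.exp_ofReal_mul_I_re]

lemma re_ofReal_mul_exp_pos {s θ : ℝ} (hs : 0 < s) (hθ : 0 < Real.cos θ) :
    0 < ((s : ℂ) * exp (θ * I)).re := by
  rw [re_ofReal_mul_exp]; positivity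

lemma cosh_sq_dH_norm_mul_exp_le {z : ℂ} (hz : 0 < z.re) {θ : ℝ} (hθ : 0 < Real.cos θ) :
    Real.cosh (dH z (‖z‖ * exp (θ * I))) ^ 2 ≤ ‖z‖ / (z.re * Real.cos θ) := by
  have hr : 0 < ‖z‖ := hz.trans_le (Complex.re_le_norm z)
  have hsum : ‖z + (starRingEnd ℂ) (‖z‖ * exp (θ * I))‖ ≤ 2 * ‖z‖ := by
    refine (norm_add_le _ _).trans ?_
    rw [Complex.norm_conj, norm_mul, Complex.norm_exp_ofReal_mul_I, Complex.norm_real,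
      Real.norm_of_nonneg hr.le]
    linarith
  rw [cosh_dH_sq hz (re_ofReal_mul_exp_pos hr hθ), re_ofReal_mul_exp]
  calc ‖z + (starRingEnd ℂ) (‖z‖ * exp (θ * I))‖ ^ 2 / (4 * (z.re * (‖z‖ * Real.cos θ)))
      ≤ (2 * ‖z‖) ^ 2 / (4 * (z.re * (‖z‖ * Real.cos θ))) := by gcongr
    _ = ‖z‖ / (z.re * Real.cos θ) := by field_simp; ring

lemma cosh_sq_dH_ofReal_mul_exp {z : ℂ} (hz : 0 < z.re) {θ s : ℝ} (hθ : 0 < Real.cos θ)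
    (hs : 0 < s) :
    Real.cosh (dH z (s * exp (θ * I))) ^ 2 = Real.cosh (dH z (‖z‖ * exp (θ * I))) ^ 2 +
      (‖z‖ - s) ^ 2 / (4 * z.re * s * Real.cos θ) := by
  have hr : 0 < ‖z‖ := hz.trans_le (Complex.re_le_norm z)
  have hnorm : ‖z‖ ^ 2 = z.re ^ 2 + z.im ^ 2 := by
    rw [Complex.sq_norm, Complex.normSq_apply]; ring
  rw [cosh_dH_sq hz (re_ofReal_mul_exp_pos hs hθ), cosh_dH_sq hz (re_ofReal_mul_exp_pos hr hθ),
    re_ofReal_mul_exp, re_ofReal_mul_exp, Complex.sq_norm, Complex.sq_norm, Complex.normSq_apply,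
    Complex.normSq_apply]
  simp only [Complex.add_re, Complex.add_im, Complex.conj_re, Complex.conj_im, Complex.mul_re,
    Complex.mul_im, Complex.ofReal_re, Complex.ofReal_im, Complex.exp_ofReal_mul_I_re,
    Complex.exp_ofReal_mul_I_im, zero_mul, sub_zero, add_zero]
  field_simp
  linear_combination (s - ‖z‖) * hnorm + (‖z‖ * s ^ 2 - s * ‖z‖ ^ 2) * Real.sin_sq_add_cos_sq θ

lemma sinh_sq_dH_ofReal_mul_exp {r s θ : ℝ} (hr : 0 < r) (hs : 0 < s) (hθ : 0 < Real.cos θ) :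
    Real.sinh (dH (r * exp (θ * I)) (s * exp (θ * I))) ^ 2 =
      (r - s) ^ 2 / (4 * r * s * Real.cos θ ^ 2) := by
  rw [sinh_dH_sq (re_ofReal_mul_exp_pos hr hθ) (re_ofReal_mul_exp_pos hs hθ), re_ofReal_mul_exp,
    re_ofReal_mul_exp, ← sub_mul, ← Complex.ofReal_sub, norm_mul, Complex.norm_exp_ofReal_mul_I,
    mul_one, Complex.norm_real, Real.norm_eq_abs, sq_abs]
  ring

lemma cosh_sq_dH_norm_mul_exp_mul_le {z : ℂ} (hz : 0 < z.re) {θ s : ℝ}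
    (hθ : 0 < Real.cos θ) (hs : 0 < s) :
    Real.cosh (dH z (‖z‖ * exp (θ * I))) ^ 2 *
        (1 + Real.cos θ ^ 2 * Real.sinh (dH (‖z‖ * exp (θ * I)) (s * exp (θ * I))) ^ 2) ≤
      Real.cosh (dH z (s * exp (θ * I))) ^ 2 := by
  have hr : 0 < ‖z‖ := hz.trans_le (Complex.re_le_norm z)
  rw [cosh_sq_dH_ofReal_mul_exp hz hθ hs, sinh_sq_dH_ofReal_mul_exp hr hs hθ, mul_one_add]
  gcongr
  calc Real.cosh (dH z (‖z‖ * exp (θ * I))) ^ 2 *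
        (Real.cos θ ^ 2 * ((‖z‖ - s) ^ 2 / (4 * ‖z‖ * s * Real.cos θ ^ 2)))
      ≤ ‖z‖ / (z.re * Real.cos θ) *
        (Real.cos θ ^ 2 * ((‖z‖ - s) ^ 2 / (4 * ‖z‖ * s * Real.cos θ ^ 2))) := by
        gcongr; exact cosh_sq_dH_norm_mul_exp_le hz hθ
    _ = (‖z‖ - s) ^ 2 / (4 * z.re * s * Real.cos θ) := by field_simp

lemma sq_norm_sub_norm_div_le_cosh_sq_dH {z p : ℂ} (hz : 0 < z.re) (hp : 0 < p.re) :
    (‖z‖ - ‖p‖) ^ 2 / (4 * (z.re * ‖p‖)) ≤ Real.cosh (dH z p) ^ 2 := by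
  have hnum : |‖z‖ - ‖p‖| ≤ ‖z + (starRingEnd ℂ) p‖ := by
    simpa [sub_neg_eq_add] using abs_norm_sub_norm_le z (-(starRingEnd ℂ) p)
  rw [cosh_dH_sq hz hp]
  calc (‖z‖ - ‖p‖) ^ 2 / (4 * (z.re * ‖p‖)) ≤ (‖z‖ - ‖p‖) ^ 2 / (4 * (z.re * p.re)) := by
        gcongr; exact Complex.re_le_norm p
    _ ≤ ‖z + (starRingEnd ℂ) p‖ ^ 2 / (4 * (z.re * p.re)) := by
        rw [← sq_abs]; gcongr

lemma Real.cosh_sq_le_exp_mul_cosh_sq {a b δ : ℝ} (ha : 0 ≤ a) (hδ : 0 ≤ δ) (h : a ≤ b + δ) :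
    Real.cosh a ^ 2 ≤ Real.exp (2 * δ) * Real.cosh b ^ 2 := by
  have hcosh : Real.cosh a ≤ Real.exp δ * Real.cosh b :=
    calc Real.cosh a ≤ Real.cosh (b + δ) := by
          rw [Real.cosh_le_cosh, abs_of_nonneg ha]; exact h.trans (le_abs_self _)
      _ = Real.cosh b * Real.cosh δ + Real.sinh b * Real.sinh δ := Real.cosh_add b δ
      _ ≤ Real.cosh b * Real.cosh δ + Real.cosh b * Real.sinh δ := by
          gcongr
          exact (Real.sinh_lt_cosh b).le
      _ = Real.exp δ * Real.cosh b := by rw [← mul_add, Real.cosh_add_sinh, mul_comm]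
  rw [mul_comm 2 δ, Real.exp_mul, Real.rpow_two, ← mul_pow]
  gcongr

lemma le_two_add_mul_of_sub_sq_le {r s K : ℝ} (hs : 0 ≤ s) (hK : 0 ≤ K)
    (h : (r - s) ^ 2 ≤ K * r * s) : r ≤ (2 + K) * s := by
  by_contra! hlt
  nlinarith [mul_nonneg hK hs, sq_nonneg s]

lemma dH_norm_mul_exp_le_of_dH_le {z : ℂ} (hz : 0 < z.re) {θ s δ : ℝ} (hθ : 0 < Real.cos θ)
    (hs : 0 < s) (hδ : 0 ≤ δ) (h : dH z (s * exp (θ * I)) ≤ dH z (‖z‖ * exp (θ * I)) + δ) :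
    dH (‖z‖ * exp (θ * I)) (s * exp (θ * I)) ≤ √(Real.exp (2 * δ) - 1) / Real.cos θ := by
  have hr : 0 < ‖z‖ := hz.trans_le (Complex.re_le_norm z)
  set d := dH (‖z‖ * exp (θ * I)) (s * exp (θ * I))
  have hd : 0 ≤ d := dH_nonneg (re_ofReal_mul_exp_pos hr hθ) (re_ofReal_mul_exp_pos hs hθ)
  have hcosh_pos : 0 < Real.cosh (dH z (‖z‖ * exp (θ * I))) ^ 2 := by positivity
  have hgrowth : 1 + Real.cos θ ^ 2 * Real.sinh d ^ 2 ≤ Real.exp (2 * δ) := by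
    refine le_of_mul_le_mul_left ?_ hcosh_pos
    rw [mul_comm _ (Real.exp _)]
    exact (cosh_sq_dH_norm_mul_exp_mul_le hz hθ hs).trans (Real.cosh_sq_le_exp_mul_cosh_sq
      (dH_nonneg hz (re_ofReal_mul_exp_pos hs hθ)) hδ h)
  rw [le_div_iff₀ hθ]
  calc d * Real.cos θ ≤ Real.sinh d * Real.cos θ := by gcongr; exact Real.self_le_sinh_iff.2 hd
    _ = √((Real.cos θ * Real.sinh d) ^ 2) := by
        rw [Real.sqrt_sq (by positivity), mul_comm]
    _ ≤ √(Real.exp (2 * δ) - 1) := by gcongr; linarith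

lemma norm_le_mul_norm_of_dH_le {z p : ℂ} (hz : 0 < z.re) (hp : 0 < p.re) {θ δ : ℝ}
    (hθ : 0 < Real.cos θ) (hδ : 0 ≤ δ) (h : dH z p ≤ dH z (‖z‖ * exp (θ * I)) + δ) :
    ‖z‖ ≤ (2 + 4 * Real.exp (2 * δ) / Real.cos θ) * ‖p‖ := by
  have hr : 0 < ‖z‖ := hz.trans_le (Complex.re_le_norm z)
  have hpn : 0 < ‖p‖ := hp.trans_le (Complex.re_le_norm p)
  have hbound : (‖z‖ - ‖p‖) ^ 2 / (4 * (z.re * ‖p‖)) ≤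
      Real.exp (2 * δ) * (‖z‖ / (z.re * Real.cos θ)) :=
    calc (‖z‖ - ‖p‖) ^ 2 / (4 * (z.re * ‖p‖)) ≤ Real.cosh (dH z p) ^ 2 :=
          sq_norm_sub_norm_div_le_cosh_sq_dH hz hp
      _ ≤ Real.exp (2 * δ) * Real.cosh (dH z (‖z‖ * exp (θ * I))) ^ 2 :=
          Real.cosh_sq_le_exp_mul_cosh_sq (dH_nonneg hz hp) hδ h
      _ ≤ Real.exp (2 * δ) * (‖z‖ / (z.re * Real.cos θ)) := by
          gcongr; exact cosh_sq_dH_norm_mul_exp_le hz hθ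
  refine le_two_add_mul_of_sub_sq_le hpn.le (by positivity) ?_
  rw [div_le_iff₀ (by positivity)] at hbound
  calc (‖z‖ - ‖p‖) ^ 2 ≤ Real.exp (2 * δ) * (‖z‖ / (z.re * Real.cos θ)) * (4 * (z.re * ‖p‖)) :=
        hbound
    _ = 4 * Real.exp (2 * δ) / Real.cos θ * ‖z‖ * ‖p‖ := by field_simp

section AlmostNearest

variable {ι : Type*} {l : Filter ι} {z p : ι → ℂ} {θ : ℝ} {δ : ι → ℝ}

lemma tendsto_norm_of_dH_le (hz : ∀ i, 0 < (z i).re) (hp : ∀ i, 0 < (p i).re)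
    (hθ : 0 < Real.cos θ) (hδ0 : ∀ i, 0 ≤ δ i) (hδ : Tendsto δ l (𝓝 0))
    (h : ∀ i, dH (z i) (p i) ≤ dH (z i) (‖z i‖ * exp (θ * I)) + δ i)
    (hzinf : Tendsto (fun i => ‖z i‖) l atTop) :
    Tendsto (fun i => ‖p i‖) l atTop := by
  have hK : 0 < 2 + 4 * Real.exp 2 / Real.cos θ := by positivity
  refine tendsto_atTop_mono' l ?_ (hzinf.atTop_div_const hK)
  filter_upwards [hδ.eventually_le_const one_pos] with i hi
  rw [div_le_iff₀' hK]
  refine (norm_le_mul_norm_of_dH_le (hz i) (hp i) hθ (hδ0 i) (h i)).trans ?_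
  gcongr
  linarith

lemma tendsto_dH_of_dH_le (hz : ∀ i, 0 < (z i).re) (hp : ∀ i, 0 < (p i).re)
    (hθ : 0 < Real.cos θ) (hδ0 : ∀ i, 0 ≤ δ i) (hδ : Tendsto δ l (𝓝 0))
    (h : ∀ i, dH (z i) (p i) ≤ dH (z i) (‖z i‖ * exp (θ * I)) + δ i)
    (hradial : Tendsto (fun i => dH (p i) (‖p i‖ * exp (θ * I))) l (𝓝 0)) :
    Tendsto (fun i => dH (‖z i‖ * exp (θ * I)) (p i)) l (𝓝 0) := by
  have hq i : 0 < ((‖z i‖ : ℂ) * exp (θ * I)).re :=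
    re_ofReal_mul_exp_pos ((hz i).trans_le (Complex.re_le_norm _)) hθ
  have hw i : 0 < ((‖p i‖ : ℂ) * exp (θ * I)).re :=
    re_ofReal_mul_exp_pos ((hp i).trans_le (Complex.re_le_norm _)) hθ
  set ε := fun i => δ i + dH (p i) (‖p i‖ * exp (θ * I))
  have hε0 i : 0 ≤ ε i := add_nonneg (hδ0 i) (dH_nonneg (hp i) (hw i))
  have hzw i : dH (z i) (‖p i‖ * exp (θ * I)) ≤ dH (z i) (‖z i‖ * exp (θ * I)) + ε i := by
    linarith [dH_triangle (hz i) (hp i) (hw i), h i]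
  have hqw i : dH (‖z i‖ * exp (θ * I)) (‖p i‖ * exp (θ * I)) ≤
      √(Real.exp (2 * ε i) - 1) / Real.cos θ :=
    dH_norm_mul_exp_le_of_dH_le (hz i) hθ ((hp i).trans_le (Complex.re_le_norm _)) (hε0 i) (hzw i)
  have hbound : Tendsto (fun i => √(Real.exp (2 * ε i) - 1) / Real.cos θ +
      dH (p i) (‖p i‖ * exp (θ * I))) l (𝓝 0) := by
    have hcont : Continuous fun x : ℝ => √(Real.exp (2 * x) - 1) / Real.cos θ := by fun_prop
    simpa using ((hcont.tendsto 0).comp (by simpa using hδ.add hradial)).add hradial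
  refine tendsto_of_tendsto_of_tendsto_of_le_of_le tendsto_const_nhds hbound
    (fun i => dH_nonneg (hq i) (hp i)) fun i => ?_
  calc dH (‖z i‖ * exp (θ * I)) (p i)
      ≤ dH (‖z i‖ * exp (θ * I)) (‖p i‖ * exp (θ * I)) + dH (‖p i‖ * exp (θ * I)) (p i) :=
        dH_triangle (hq i) (hw i) (hp i)
    _ ≤ _ := by rw [dH_comm (hw i) (hp i)]; gcongr; exact hqw i

end AlmostNearest

lemma tendsto_atTop_of_tendsto_norm_comp_s7 {E : Type*} [NormedAddCommGroup E] {f : ℝ → E} {a : ℝ}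
    (hf : ContinuousOn f (Set.Ici a)) {ι : Type*} {l : Filter ι} {s : ι → ℝ}
    (hs : ∀ i, a ≤ s i) (h : Tendsto (fun i => ‖f (s i)‖) l atTop) : Tendsto s l atTop := by
  rw [tendsto_atTop]
  intro T
  obtain ⟨M, hM⟩ := ((isCompact_Icc (a := a) (b := T)).image_of_continuousOn
    (hf.mono Set.Icc_subset_Ici_self)).isBounded.exists_norm_le
  filter_upwards [h.eventually_gt_atTop M] with i hi
  by_contra! hlt
  exact (hM _ ⟨s i, ⟨hs i, hlt.le⟩, rfl⟩).not_gt hi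

lemma tendsto_dH_norm_mul_exp_of_tendsto_arg {ι : Type*} {l : Filter ι} {f : ι → ℂ} {θ : ℝ}
    (hθ : 0 < Real.cos θ) (hf : ∀ᶠ i in l, f i ≠ 0) (harg : Tendsto (fun i => (f i).arg) l (𝓝 θ)) :
    Tendsto (fun i => dH (f i) (‖f i‖ * exp (θ * I))) l (𝓝 0) :=
  ((tendsto_dH_exp_mul_I hθ).comp harg).congr' (hf.mono fun _ hi => (dH_eq_dH_exp_arg hi θ).symm)

lemma exists_tendsto_dH_curve_ofReal_mul_exp {γ : ℝ → ℂ} {θ : ℝ}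
    (hγc : ContinuousOn γ (Set.Ici 0)) (hland : Tendsto (fun t => ‖γ t‖) atTop atTop)
    (hradial : Tendsto (fun t => dH (γ t) (‖γ t‖ * exp (θ * I))) atTop (𝓝 0))
    {R : ℕ → ℝ} (hR : Tendsto R atTop atTop) :
    ∃ t : ℕ → ℝ, (∀ n, 0 ≤ t n) ∧
      Tendsto (fun n => dH (γ (t n)) (R n * exp (θ * I))) atTop (𝓝 0) := by
  have hsurj : Set.Ici ‖γ 0‖ ⊆ (fun t => ‖γ t‖) '' Set.Ici 0 :=
    intermediate_value_Ici (continuous_norm.comp_continuousOn hγc) hland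
  have hchoice n : ∃ t ≥ (0 : ℝ), ‖γ 0‖ ≤ R n → ‖γ t‖ = R n := by
    by_cases hn : ‖γ 0‖ ≤ R n
    · obtain ⟨t, ht, hγt⟩ := hsurj hn
      exact ⟨t, ht, fun _ => hγt⟩
    · exact ⟨0, le_rfl, fun h => absurd h hn⟩
  choose t ht0 hnorm using hchoice
  have hnorm' : ∀ᶠ n in atTop, ‖γ (t n)‖ = R n := (hR.eventually_ge_atTop _).mono hnorm
  have ht : Tendsto t atTop atTop :=
    tendsto_atTop_of_tendsto_norm_comp_s7 hγc ht0 (hR.congr' (hnorm'.mono fun _ h => h.symm))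
  refine ⟨t, ht0, (hradial.comp ht).congr' ?_⟩
  filter_upwards [hnorm'] with n hn
  simp only [Function.comp_apply, hn]

/-- projections onto a curve landing at ∞ with slope θ are
asymptotically close to the radial projections |z_n|e^{iθ}. -/
theorem stmt7 (γ : ℝ → ℂ)
    (hγc : ContinuousOn γ (Set.Ici 0))
    (hγin : ∀ t ≥ (0:ℝ), 0 < (γ t).re)
    (hland : Tendsto (fun t : ℝ => ‖γ t‖) atTop atTop)
    (θ : ℝ) (hθ : θ ∈ Set.Ioo (-(Real.pi/2)) (Real.pi/2))
    (hslope : Tendsto (fun t : ℝ => (γ t).arg) atTop (𝓝 θ))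
    (z : ℕ → ℂ) (hz : ∀ n, 0 < (z n).re)
    (hzinf : Tendsto (fun n : ℕ => ‖z n‖) atTop atTop)
    (p : ℕ → ℂ) (hp : ∀ n : ℕ, IsProjH γ (z n) (p n)) :
    Tendsto (fun n : ℕ =>
      dH (((‖z n‖ : ℝ) : ℂ) * Complex.exp ((θ : ℂ) * I)) (p n)) atTop (𝓝 0) := by
  have hC : 0 < Real.cos θ := Real.cos_pos_of_mem_Ioo hθ
  have hγ0 : ∀ᶠ t in atTop, γ t ≠ 0 := (eventually_ge_atTop 0).mono fun t ht h0 => by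
    simpa [h0] using hγin t ht
  have hradial := tendsto_dH_norm_mul_exp_of_tendsto_arg hC hγ0 hslope
  obtain ⟨t, ht0, hδ⟩ := exists_tendsto_dH_curve_ofReal_mul_exp hγc hland hradial hzinf
  choose s hs0 hps using fun n => (hp n).1
  have hpre n : 0 < (p n).re := hps n ▸ hγin _ (hs0 n)
  have hq n : 0 < ((‖z n‖ : ℂ) * exp (θ * I)).re :=
    re_ofReal_mul_exp_pos ((hz n).trans_le (Complex.re_le_norm _)) hC
  have hnear n : dH (z n) (p n) ≤ dH (z n) (‖z n‖ * exp (θ * I)) +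
      dH (γ (t n)) (‖z n‖ * exp (θ * I)) := by
    rw [dH_comm (hγin _ (ht0 n)) (hq n)]
    exact ((hp n).2 _ (ht0 n)).trans (dH_triangle (hz n) (hq n) (hγin _ (ht0 n)))
  have hδ0 n := dH_nonneg (hγin _ (ht0 n)) (hq n)
  have hs : Tendsto s atTop atTop := tendsto_atTop_of_tendsto_norm_comp_s7 hγc hs0 (by
    simpa only [← hps] using tendsto_norm_of_dH_le hz hpre hC hδ0 hδ hnear hzinf)
  exact tendsto_dH_of_dH_le hz hpre hC hδ0 hδ hnear ((hradial.comp hs).congr fun n => by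
    simp only [Function.comp_apply, hps])
end

section
/- Let f : ℍ → ℍ be a hyperbolic holomorphic self-map of the right half-plane with Denjoy–Wolff point ∞. Fix w ∈ ℍ and let γ : [0,∞) → ℍ be the hyperbolic geodesic γ(t) = w + t emanating from w and landing at ∞. For z ∈ ℍ, let π_n denote the (unique, for large n) projection of f^n(z) onto γ. Then the sequence {d_ℍ(w, π_n)} is eventually strictly increasing. -/
open Complex Filter Topology

/-!
Schwarz–Pick and Julia's lemma give `Re f ζ ≥ c Re ζ`, while consecutive points of the orbit stay
at bounded hyperbolic distance; hence the orbit escapes geometrically inside a Stolz angle, where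
`f ζ / ζ → c` forces `‖f^[n+1] z‖ ≥ (c + 1) / 2 * ‖f^[n] z‖`. The geodesics orthogonal to the
horizontal line through `w` are the circles centred at `i Im w`, so the projection `π` of `ζ`
satisfies `Re π = ‖ζ - i Im w‖` and `d(w, π) = ½ log (‖ζ - i Im w‖ / Re w)`, which is
eventually increasing along the orbit.
-/

open ComplexConjugate Metric Set

lemma add_conj_ne_zero {a b : ℂ} (ha : 0 < a.re) (hb : 0 < b.re) : a + conj b ≠ 0 := by
  intro h
  have := congrArg re h
  simp only [add_re, conj_re, zero_re] at this
  linarith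

lemma normSq_add_conj_sub_normSq_sub (a b : ℂ) :
    normSq (a + conj b) - normSq (a - b) = 4 * a.re * b.re := by
  simp only [normSq_apply, add_re, add_im, sub_re, sub_im, conj_re, conj_im]
  ring

lemma rhoH_nonneg_s9 (a b : ℂ) : 0 ≤ rhoH a b := norm_nonneg _

lemma rhoH_sq (a b : ℂ) : rhoH a b ^ 2 = normSq (a - b) / normSq (a + conj b) := by
  rw [rhoH, Complex.sq_norm, normSq_div]

lemma one_sub_rhoH_sq_s9 {a b : ℂ} (ha : 0 < a.re) (hb : 0 < b.re) :
    1 - rhoH a b ^ 2 = 4 * a.re * b.re / normSq (a + conj b) := by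
  have hpos := normSq_pos.mpr (add_conj_ne_zero ha hb)
  rw [rhoH_sq, ← normSq_add_conj_sub_normSq_sub]
  field_simp

lemma rhoH_lt_one_s9 {a b : ℂ} (ha : 0 < a.re) (hb : 0 < b.re) : rhoH a b < 1 := by
  have h : 0 < 1 - rhoH a b ^ 2 := by
    rw [one_sub_rhoH_sq_s9 ha hb]
    have := normSq_pos.mpr (add_conj_ne_zero ha hb)
    positivity
  nlinarith [rhoH_nonneg_s9 a b]

lemma dH_eq_artanh_s9 {a b : ℂ} (ha : 0 < a.re) (hb : 0 < b.re) :
    dH a b = Real.artanh (rhoH a b) :=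
  (Real.artanh_eq_half_log ⟨by linarith [rhoH_nonneg_s9 a b], (rhoH_lt_one_s9 ha hb).le⟩).symm

lemma dH_lt_dH_of_rhoH_lt {a b b' : ℂ} (ha : 0 < a.re) (hb : 0 < b.re) (hb' : 0 < b'.re)
    (h : rhoH a b < rhoH a b') : dH a b < dH a b' := by
  rw [dH_eq_artanh_s9 ha hb, dH_eq_artanh_s9 ha hb']
  exact Real.artanh_lt_artanh (by linarith [rhoH_nonneg_s9 a b]) (rhoH_lt_one_s9 ha hb') h

/-- The Cayley map of the unit disc onto the right half-plane sending `0` to `w`; its inverse is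
`z ↦ (z - w) / (z + conj w)`, whose modulus is `rhoH z w`. -/
noncomputable def cayleyH (w ξ : ℂ) : ℂ := (w + conj w * ξ) / (1 - ξ)

lemma re_cayleyH_pos {w ξ : ℂ} (hw : 0 < w.re) (hξ : ‖ξ‖ < 1) : 0 < (cayleyH w ξ).re := by
  have hξ1 : 1 - ξ ≠ 0 := sub_ne_zero.mpr fun h => by simp [← h] at hξ
  have hns : normSq ξ < 1 := by rw [← Complex.sq_norm]; nlinarith [norm_nonneg ξ]
  have hnum : (w + conj w * ξ).re * (1 - ξ).re + (w + conj w * ξ).im * (1 - ξ).im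
      = w.re * (1 - normSq ξ) := by
    simp only [normSq_apply, add_re, add_im, mul_re, mul_im, sub_re, sub_im, conj_re, conj_im,
      one_re, one_im]
    ring
  rw [cayleyH, div_re, ← add_div, hnum]
  exact div_pos (mul_pos hw (by linarith)) (normSq_pos.mpr hξ1)

lemma cayleyH_div {z w : ℂ} (hz : 0 < z.re) (hw : 0 < w.re) :
    cayleyH w ((z - w) / (z + conj w)) = z := by
  have hzw := add_conj_ne_zero hz hw
  have hww := add_conj_ne_zero hw hw
  have hden : z + conj w - (z - w) ≠ 0 := by rwa [show z + conj w - (z - w) = w + conj w by ring]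
  rw [cayleyH, one_sub_div hzw, div_div_eq_mul_div, div_eq_iff hden]
  field_simp
  ring

theorem rhoH_map_le_of_mapsTo {f : ℂ → ℂ} (hmaps : ∀ z : ℂ, 0 < z.re → 0 < (f z).re)
    (hd : DifferentiableOn ℂ f {z : ℂ | 0 < z.re}) {z w : ℂ} (hz : 0 < z.re) (hw : 0 < w.re) :
    rhoH (f z) (f w) ≤ rhoH z w := by
  set g : ℂ → ℂ := fun ξ => (f (cayleyH w ξ) - f w) / (f (cayleyH w ξ) + conj (f w))
  have hC : MapsTo (cayleyH w) (ball 0 1) {z | 0 < z.re} :=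
    fun ξ hξ => re_cayleyH_pos hw (mem_ball_zero_iff.mp hξ)
  have hCd : DifferentiableOn ℂ (cayleyH w) (ball 0 1) := by
    refine ((differentiableOn_const _).add ((differentiableOn_const _).mul differentiableOn_id)).div
      ((differentiableOn_const _).sub differentiableOn_id) fun ξ hξ h => ?_
    rw [mem_ball_zero_iff, ← sub_eq_zero.mp h] at hξ
    simp at hξ
  have hfC := hd.comp hCd hC
  have hgd : DifferentiableOn ℂ g (ball 0 1) :=
    (hfC.sub (differentiableOn_const _)).div (hfC.add (differentiableOn_const _))
      fun ξ hξ => add_conj_ne_zero (hmaps _ (hC hξ)) (hmaps w hw)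
  have hgmaps : MapsTo g (ball 0 1) (closedBall 0 1) := fun ξ hξ =>
    mem_closedBall_zero_iff.mpr (rhoH_lt_one_s9 (hmaps _ (hC hξ)) (hmaps w hw)).le
  have hg0 : g 0 = 0 := by simp [g, cayleyH]
  have := Complex.norm_le_norm_of_mapsTo_ball hgd hgmaps hg0 (rhoH_lt_one_s9 hz hw)
  simpa only [g, cayleyH_div hz hw, rhoH] using this

lemma rhoH_iterate_succ_le {f : ℂ → ℂ} (hmaps : ∀ z : ℂ, 0 < z.re → 0 < (f z).re)
    (hd : DifferentiableOn ℂ f {z : ℂ | 0 < z.re}) {z : ℂ} (hz : 0 < z.re) (n : ℕ) :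
    rhoH (f^[n + 1] z) (f^[n] z) ≤ rhoH (f z) z := by
  induction n with
  | zero => simp
  | succ n ih =>
    have hmaps' : MapsTo f {z : ℂ | 0 < z.re} {z : ℂ | 0 < z.re} := hmaps
    have h := rhoH_map_le_of_mapsTo hmaps hd (hmaps'.iterate (n + 1) hz) (hmaps'.iterate n hz)
    rw [← Function.iterate_succ_apply' f (n + 1), ← Function.iterate_succ_apply' f n] at h
    exact h.trans ih

lemma re_mul_re_mul_re_le_of_rhoH_le {a b u v : ℂ} (ha : 0 < a.re) (hb : 0 < b.re)
    (hu : 0 < u.re) (hv : 0 < v.re) (h : rhoH u v ≤ rhoH a b) :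
    a.re * b.re * v.re ≤ u.re * normSq (a + conj b) := by
  have hN := normSq_pos.mpr (add_conj_ne_zero ha hb)
  have hN' := normSq_pos.mpr (add_conj_ne_zero hu hv)
  have hsq : 4 * a.re * b.re / normSq (a + conj b) ≤ 4 * u.re * v.re / normSq (u + conj v) := by
    rw [← one_sub_rhoH_sq_s9 ha hb, ← one_sub_rhoH_sq_s9 hu hv]
    nlinarith [rhoH_nonneg_s9 u v]
  have hvN : v.re ^ 2 ≤ normSq (u + conj v) := by
    simp only [normSq_apply, add_re, add_im, conj_re, conj_im]
    nlinarith [sq_nonneg (u.im - v.im)]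
  rw [div_le_div_iff₀ hN hN'] at hsq
  have : a.re * b.re * v.re * v.re ≤ u.re * normSq (a + conj b) * v.re := by
    nlinarith [mul_le_mul_of_nonneg_left hvN (mul_pos ha hb).le]
  exact le_of_mul_le_mul_right this hv

def HasAngularDerivAtInf (f : ℂ → ℂ) (c : ℝ) : Prop :=
  ∀ φ ∈ Ioo (0:ℝ) (Real.pi / 2), ∀ ε > (0:ℝ), ∃ R : ℝ,
    ∀ z : ℂ, 0 < z.re → |z.arg| < φ → R < ‖z‖ → ‖f z / z - (c:ℂ)‖ < ε

lemma HasAngularDerivAtInf.tendsto_div_ofReal {f : ℂ → ℂ} {c : ℝ} (h : HasAngularDerivAtInf f c) :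
    Tendsto (fun x : ℝ => f x / x) atTop (𝓝 (c:ℂ)) := by
  refine Metric.tendsto_nhds.mpr fun ε hε => ?_
  obtain ⟨R, hR⟩ := h (Real.pi / 4) ⟨by positivity, by linarith [Real.pi_pos]⟩ ε hε
  filter_upwards [eventually_gt_atTop 0, eventually_gt_atTop R] with x hx0 hxR
  rw [dist_eq_norm]
  refine hR x (by simpa using hx0) ?_ ?_
  · rw [arg_ofReal_of_nonneg hx0.le, abs_zero]
    positivity
  · rwa [norm_real, Real.norm_of_nonneg hx0.le]

/-- Julia's lemma at the boundary point `∞`. -/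
theorem mul_re_le_re_of_tendsto {f : ℂ → ℂ} (hmaps : ∀ z : ℂ, 0 < z.re → 0 < (f z).re)
    (hd : DifferentiableOn ℂ f {z : ℂ | 0 < z.re}) {c : ℝ}
    (hc : Tendsto (fun x : ℝ => f x / x) atTop (𝓝 (c:ℂ))) {ζ : ℂ} (hζ : 0 < ζ.re) :
    c * ζ.re ≤ (f ζ).re := by
  have hpt : ∀ᶠ x : ℝ in atTop, ζ.re * (f x / x).re ≤ (f ζ).re * normSq (ζ / x + 1) := by
    filter_upwards [eventually_gt_atTop 0] with x hx
    have hx' : 0 < (x : ℂ).re := by simpa using hx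
    have h := re_mul_re_mul_re_le_of_rhoH_le hζ hx' (hmaps ζ hζ) (hmaps x hx')
      (rhoH_map_le_of_mapsTo hmaps hd hζ hx')
    have hx0 : (x : ℂ) ≠ 0 := ofReal_ne_zero.mpr hx.ne'
    rw [div_ofReal_re, show ζ / x + 1 = (ζ + conj (x : ℂ)) / x by rw [conj_ofReal]; field_simp,
      normSq_div, normSq_ofReal, mul_div_assoc', mul_div_assoc', div_le_div_iff₀ hx (by positivity)]
    simp only [ofReal_re] at h
    nlinarith [mul_le_mul_of_nonneg_right h hx.le]
  have hl : Tendsto (fun x : ℝ => ζ.re * (f x / x).re) atTop (𝓝 (ζ.re * c)) := by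
    simpa using ((continuous_re.tendsto _).comp hc).const_mul ζ.re
  have hr : Tendsto (fun x : ℝ => (f ζ).re * normSq (ζ / x + 1)) atTop (𝓝 ((f ζ).re * 1)) := by
    have h0 : Tendsto (fun x : ℝ => ζ / x) atTop (𝓝 0) := by
      simpa [div_eq_mul_inv] using
        (((continuous_ofReal.tendsto 0).comp tendsto_inv_atTop_zero).const_mul ζ)
    simpa using (((continuous_normSq.tendsto _).comp (h0.add_const 1))).const_mul (f ζ).re
  have := le_of_tendsto_of_tendsto hl hr hpt
  linarith

lemma abs_im_sub_le_of_rhoH_le {a b : ℂ} (ha : 0 < a.re) (hb : 0 < b.re) {k : ℝ}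
    (hk : rhoH a b ≤ k) (hk1 : k < 1) :
    |a.im - b.im| ≤ k / (1 - k) * (a.re + b.re) := by
  have hN := norm_pos_iff.mpr (add_conj_ne_zero ha hb)
  have h1 : ‖a - b‖ ≤ k * ‖a + conj b‖ := by rwa [rhoH, norm_div, div_le_iff₀ hN] at hk
  have h2 : |a.im - b.im| ≤ ‖a - b‖ := by simpa using abs_im_le_norm (a - b)
  have h3 : ‖a + conj b‖ ≤ a.re + b.re + |a.im - b.im| := by
    simpa [abs_of_pos (add_pos ha hb), sub_eq_add_neg] using norm_le_abs_re_add_abs_im (a + conj b)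
  have hk0 : 0 ≤ k := (rhoH_nonneg_s9 a b).trans hk
  rw [div_mul_eq_mul_div, le_div_iff₀ (by linarith)]
  nlinarith

lemma abs_sub_le_of_geom_le {x y : ℕ → ℝ} {c K : ℝ} (hc : 1 < c) (hK : 0 ≤ K) (hx0 : 0 ≤ x 0)
    (hx : ∀ n, c * x n ≤ x (n + 1)) (hy : ∀ n, |y (n + 1) - y n| ≤ K * (x (n + 1) + x n))
    (n : ℕ) : |y n - y 0| ≤ K * (c + 1) / (c - 1) * x n := by
  have hc1 : c - 1 ≠ 0 := sub_ne_zero.mpr hc.ne'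
  set B := K * (c + 1) / (c - 1)
  -- `B` is chosen so that `(B - K) * c = B + K`, which makes the bound inductive.
  have hBK : (B - K) * c = B + K := by
    simp only [B]
    field_simp
    ring
  have hBK0 : 0 ≤ B - K := by
    rw [show B - K = 2 * K / (c - 1) by simp only [B]; field_simp; ring]
    exact div_nonneg (by linarith) (by linarith)
  induction n with
  | zero => simpa using mul_nonneg (by linarith) hx0
  | succ n ih =>
    calc |y (n + 1) - y 0| ≤ |y (n + 1) - y n| + |y n - y 0| := abs_sub_le _ _ _
      _ ≤ K * (x (n + 1) + x n) + B * x n := add_le_add (hy n) ih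
      _ = K * x (n + 1) + (B - K) * (c * x n) := by rw [← mul_assoc, hBK]; ring
      _ ≤ K * x (n + 1) + (B - K) * x (n + 1) := by gcongr; exact hx n
      _ = B * x (n + 1) := by ring

lemma abs_arg_lt_arctan {ζ : ℂ} (hζ : 0 < ζ.re) {s : ℝ} (h : |ζ.im| < s * ζ.re) :
    |arg ζ| < Real.arctan s := by
  have hπ := abs_lt.mp (abs_arg_lt_pi_div_two_iff.mpr (Or.inl hζ))
  have harg : arg ζ = Real.arctan (ζ.im / ζ.re) := by
    rw [← tan_arg, Real.arctan_tan hπ.1 hπ.2]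
  rw [harg, abs_lt, ← Real.arctan_neg, Real.arctan_lt_arctan_iff, Real.arctan_lt_arctan_iff,
    lt_div_iff₀ hζ, div_lt_iff₀ hζ]
  constructor <;> linarith [abs_lt.mp h]

theorem exists_abs_arg_iterate_lt {f : ℂ → ℂ} (hmaps : ∀ z : ℂ, 0 < z.re → 0 < (f z).re)
    (hd : DifferentiableOn ℂ f {z : ℂ | 0 < z.re}) {c : ℝ} (hc : 1 < c)
    (hjulia : ∀ ζ : ℂ, 0 < ζ.re → c * ζ.re ≤ (f ζ).re) {z : ℂ} (hz : 0 < z.re) :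
    ∃ φ ∈ Ioo 0 (Real.pi / 2), ∀ᶠ n in atTop, |arg (f^[n] z)| < φ := by
  have hmaps' : MapsTo f {z : ℂ | 0 < z.re} {z : ℂ | 0 < z.re} := hmaps
  have hre : ∀ n, 0 < (f^[n] z).re := fun n => hmaps'.iterate n hz
  have hstep : ∀ n, c * (f^[n] z).re ≤ (f^[n + 1] z).re := fun n => by
    rw [Function.iterate_succ_apply']
    exact hjulia _ (hre n)
  set k := rhoH (f z) z
  have hk1 : k < 1 := rhoH_lt_one_s9 (hmaps z hz) hz
  have hK : 0 ≤ k / (1 - k) := div_nonneg (rhoH_nonneg_s9 _ _) (by linarith)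
  set B := k / (1 - k) * (c + 1) / (c - 1)
  have hB : 0 ≤ B := div_nonneg (mul_nonneg hK (by linarith)) (by linarith)
  have him : ∀ n, |(f^[n] z).im - z.im| ≤ B * (f^[n] z).re :=
    abs_sub_le_of_geom_le hc hK (hre 0).le hstep fun n =>
      abs_im_sub_le_of_rhoH_le (hre (n + 1)) (hre n) (rhoH_iterate_succ_le hmaps hd hz n) hk1
  refine ⟨Real.arctan (B + 1), ⟨Real.arctan_pos.mpr (by linarith), Real.arctan_lt_pi_div_two _⟩, ?_⟩
  filter_upwards [(tendsto_atTop_of_geom_le (hre 0) hc hstep).eventually_gt_atTop |z.im|]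
    with n hn
  refine abs_arg_lt_arctan (hre n) ?_
  calc |(f^[n] z).im| ≤ |(f^[n] z).im - z.im| + |z.im| := by
        simpa using abs_add_le ((f^[n] z).im - z.im) z.im
    _ < (B + 1) * (f^[n] z).re := by linarith [him n]

lemma HasAngularDerivAtInf.exists_mul_norm_le {f : ℂ → ℂ} {c : ℝ} (h : HasAngularDerivAtInf f c)
    (hc : 1 < c) {φ : ℝ} (hφ : φ ∈ Ioo 0 (Real.pi / 2)) :
    ∃ R, ∀ ζ : ℂ, 0 < ζ.re → |arg ζ| < φ → R < ‖ζ‖ → (c + 1) / 2 * ‖ζ‖ ≤ ‖f ζ‖ := by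
  obtain ⟨R, hR⟩ := h φ hφ ((c - 1) / 2) (by linarith)
  refine ⟨R, fun ζ hζ harg hRζ => ?_⟩
  have hζ0 : 0 < ‖ζ‖ := norm_pos_iff.mpr fun h0 => by simp [h0] at hζ
  have hclose := hR ζ hζ harg hRζ
  have htri := norm_sub_norm_le (c : ℂ) (f ζ / ζ)
  rw [norm_sub_rev, norm_real, Real.norm_of_nonneg (by linarith)] at htri
  rw [← le_div_iff₀ hζ0, ← norm_div]
  linarith

lemma eventually_norm_sub_lt_norm_sub_succ {u : ℕ → ℂ} {q : ℝ} (hq : 1 < q)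
    (hu : Tendsto (fun n => ‖u n‖) atTop atTop)
    (hgrowth : ∀ᶠ n in atTop, q * ‖u n‖ ≤ ‖u (n + 1)‖) (a : ℂ) :
    ∀ᶠ n in atTop, ‖u n - a‖ < ‖u (n + 1) - a‖ := by
  filter_upwards [hgrowth, hu.eventually_gt_atTop (2 * ‖a‖ / (q - 1))] with n hn hbig
  rw [div_lt_iff₀ (by linarith)] at hbig
  calc ‖u n - a‖ ≤ ‖u n‖ + ‖a‖ := norm_sub_le _ _
    _ < ‖u (n + 1)‖ - ‖a‖ := by nlinarith
    _ ≤ ‖u (n + 1) - a‖ := norm_sub_norm_le _ _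

lemma rhoH_sub_mul_I (a b : ℂ) (y : ℝ) : rhoH (a - y * I) (b - y * I) = rhoH a b := by
  rw [rhoH, rhoH, show a - y * I - (b - y * I) = a - b by ring,
    show a - y * I + conj (b - y * I) = a + conj b by
      simp only [map_sub, map_mul, conj_ofReal, conj_I]
      ring]

lemma rhoH_add_ofReal (ζ w : ℂ) (t : ℝ) :
    rhoH ζ (w + t) = rhoH (ζ - w.im * I) ((w.re + t : ℝ) : ℂ) := by
  rw [← rhoH_sub_mul_I ζ (w + t) w.im]
  congr 1
  apply Complex.ext <;> simp

/-- The projection of `a` onto the geodesic `(0, ∞)` is `‖a‖`: the geodesics orthogonal to it are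
the circles centred at `0`. -/
lemma rhoH_ofReal_norm_lt {a : ℂ} (ha : 0 < a.re) {s : ℝ} (hs : 0 < s) (hne : s ≠ ‖a‖) :
    rhoH a ‖a‖ < rhoH a s := by
  have hr : 0 < ‖a‖ := norm_pos_iff.mpr fun h => by simp [h] at ha
  have hNr := normSq_pos.mpr (add_conj_ne_zero ha (show 0 < ((‖a‖ : ℝ) : ℂ).re by simpa using hr))
  have hNs := normSq_pos.mpr (add_conj_ne_zero ha (show 0 < (s : ℂ).re by simpa))
  have hr2 : a.re ^ 2 + a.im ^ 2 = ‖a‖ ^ 2 := by rw [Complex.sq_norm, normSq_apply]; ring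
  have hsr : 0 < (s - ‖a‖) ^ 2 := sq_pos_of_ne_zero (sub_ne_zero.mpr hne)
  refine lt_of_pow_lt_pow_left₀ 2 (rhoH_nonneg_s9 _ _) ?_
  rw [conj_ofReal] at hNr hNs
  rw [rhoH_sq, rhoH_sq, conj_ofReal, conj_ofReal, div_lt_div_iff₀ hNr hNs]
  simp only [normSq_apply, sub_re, sub_im, add_re, add_im, ofReal_re, ofReal_im]
  nlinarith [mul_pos (mul_pos ha hr) hsr]

lemma dH_add_ofReal {w : ℂ} (hw : 0 < w.re) {t : ℝ} (ht : 0 ≤ t) :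
    dH w (w + t) = 1 / 2 * Real.log ((w.re + t) / w.re) := by
  have hρ : rhoH w (w + t) = t / (2 * w.re + t) := by
    rw [rhoH, show w - (w + t) = -(t : ℂ) by ring,
      show w + conj (w + (t : ℂ)) = ((2 * w.re + t : ℝ) : ℂ) by apply Complex.ext <;> simp; ring,
      norm_div, norm_neg, norm_real, norm_real, Real.norm_of_nonneg ht,
      Real.norm_of_nonneg (by linarith)]
  have h2 : 0 < 2 * w.re + t := by linarith
  rw [dH, hρ]
  congr 2
  field_simp
  ring

lemma dH_eq_of_isProjH {w ζ p : ℂ} (hw : 0 < w.re) (hζ : 0 < ζ.re)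
    (hr : w.re < ‖ζ - w.im * I‖) (hp : IsProjH (fun t : ℝ => w + t) ζ p) :
    dH w p = 1 / 2 * Real.log (‖ζ - w.im * I‖ / w.re) := by
  obtain ⟨⟨t, ht, rfl⟩, hmin⟩ := hp
  set a := ζ - w.im * I
  have ha : 0 < a.re := by simpa [a] using hζ
  have hre : ∀ s : ℝ, 0 ≤ s → 0 < (w + s).re := fun s hs => by simp only [add_re, ofReal_re]; linarith
  have ht_eq : w.re + t = ‖a‖ := by
    by_contra hne
    have hlt : rhoH ζ (w + ((‖a‖ - w.re : ℝ) : ℂ)) < rhoH ζ (w + t) := by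
      rw [rhoH_add_ofReal, rhoH_add_ofReal, add_sub_cancel]
      exact rhoH_ofReal_norm_lt ha (by linarith) hne
    exact (dH_lt_dH_of_rhoH_lt hζ (hre _ (by linarith)) (hre t ht) hlt).not_ge
      (hmin _ (by linarith))
  rw [dH_add_ofReal hw ht, ht_eq]

/-- projections of a hyperbolic orbit onto the horizontal geodesic
γ(t) = w + t emanating from w give an eventually strictly increasing orthogonal speed. -/
theorem stmt9 (f : ℂ → ℂ) (hf : HyperbolicAtInf f)
    (w : ℂ) (hw : 0 < w.re) (z : ℂ) (hz : 0 < z.re)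
    (p : ℕ → ℂ) (hp : ∀ n : ℕ, IsProjH (fun t : ℝ => w + (t : ℂ)) (f^[n] z) (p n)) :
    ∃ N : ℕ, ∀ n ≥ N, dH w (p n) < dH w (p (n+1)) := by
  obtain ⟨hmaps, hd, -, c, hc, hsec⟩ := hf
  have hmaps' : MapsTo f {z : ℂ | 0 < z.re} {z : ℂ | 0 < z.re} := hmaps
  have hre : ∀ n, 0 < (f^[n] z).re := fun n => hmaps'.iterate n hz
  have hjulia : ∀ ζ : ℂ, 0 < ζ.re → c * ζ.re ≤ (f ζ).re := fun ζ hζ =>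
    mul_re_le_re_of_tendsto hmaps hd (HasAngularDerivAtInf.tendsto_div_ofReal hsec) hζ
  have hnorm : Tendsto (fun n => ‖f^[n] z‖) atTop atTop :=
    tendsto_atTop_mono (fun n => re_le_norm _) <| tendsto_atTop_of_geom_le (hre 0) hc fun n => by
      rw [Function.iterate_succ_apply']
      exact hjulia _ (hre n)
  obtain ⟨φ, hφ, harg⟩ := exists_abs_arg_iterate_lt hmaps hd hc hjulia hz
  obtain ⟨R, hR⟩ := HasAngularDerivAtInf.exists_mul_norm_le hsec hc hφ
  have hgrowth : ∀ᶠ n in atTop, (c + 1) / 2 * ‖f^[n] z‖ ≤ ‖f^[n + 1] z‖ := by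
    filter_upwards [harg, hnorm.eventually_gt_atTop R] with n hn hRn
    rw [Function.iterate_succ_apply']
    exact hR _ (hre n) hn hRn
  have hfar : Tendsto (fun n => ‖f^[n] z - w.im * I‖) atTop atTop :=
    tendsto_atTop_mono (fun n => norm_sub_norm_le _ _) (tendsto_atTop_add_const_right _ _ hnorm)
  obtain ⟨N, hN⟩ := eventually_atTop.mp <|
    (eventually_norm_sub_lt_norm_sub_succ (by linarith) hnorm hgrowth (w.im * I)).and
      (hfar.eventually_gt_atTop w.re)
  refine ⟨N, fun n hn => ?_⟩
  rw [dH_eq_of_isProjH hw (hre n) (hN n hn).2 (hp n),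
    dH_eq_of_isProjH hw (hre (n + 1)) (hN (n + 1) (by omega)).2 (hp (n + 1))]
  gcongr
  · exact div_pos (hw.trans (hN n hn).2) hw
  · exact (hN n hn).1
end
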